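/- Let (R, m, k) be a one-dimensional Cohen–Macaulay local ring with infinite residue field and minimal multiplicity, and let y be a minimal reduction of m (so m² = y·m). Then: (a) if M is a finitely generated torsion-free R-module with no nonzero free direct summand, then M^* = Hom_R(M, R) is Ulrich, i.e., m·M^* = y·M^*; (b) if I is a nonprincipal ideal of R and x ∈ I is a nonzerodivisor, then (x : I) is Ulrich; (c) if I is a nonprincipal ideal of R containing a nonzerodivisor, then tr_R(I) is Ulrich. -/

import Mathlib

open IsLocalRing

universe u

/-- The trace ideal of an `R`-module `M`: the ideal of `R` generated by all values `f(m)`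
for `f ∈ Hom_R(M, R)` and `m ∈ M`. -/
def traceIdeal (R : Type*) (M : Type*) [CommRing R] [AddCommGroup M] [Module R M] : Ideal R :=
  Ideal.span {r : R | ∃ (f : M →ₗ[R] R) (m : M), f m = r}

/-- `M` is a torsion-free `R`-module: nonzerodivisors of `R` act injectively on `M`. -/
def TorsionFreeMod (R : Type*) (M : Type*) [CommRing R] [AddCommGroup M] [Module R M] : Prop :=
  ∀ r ∈ nonZeroDivisors R, ∀ x : M, r • x = 0 → x = 0

/-- `M` has a nonzero free direct summand iff `R` is a direct summand of `M`, i.e. there is a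
split injection `R → M`. -/
def HasFreeSummand (R : Type u) (M : Type u) [CommRing R]
    [AddCommGroup M] [Module R M] : Prop :=
  ∃ (f : R →ₗ[R] M) (g : M →ₗ[R] R), g ∘ₗ f = LinearMap.id

/-!
Since `𝔪² ⊆ yR` with `y` a nonzerodivisor, `z • f` is divisible by `y` for every `z ∈ 𝔪` and every
functional `f` with values in `𝔪`. On a module without free summand (in particular on a nonprincipal
ideal) every functional takes values in `𝔪`, whence `𝔪 • M^* = y • M^*`. This equality passes to
images of `I^*` under linear maps to `R`: `(x : I)` is the image of evaluation at `x`, and `tr(I)`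
is the sum of the images of the evaluations at all elements of `I`.
-/

open scoped nonZeroDivisors

variable {R : Type*} [CommRing R] {M : Type*} [AddCommGroup M] [Module R M]

lemma LinearMap.exists_eq_smul_of_forall_dvd {x : R} (hx : x ∈ R⁰) (f : M →ₗ[R] R)
    (h : ∀ u, x ∣ f u) : ∃ g : M →ₗ[R] R, f = x • g := by
  choose g hg using h
  refine ⟨{ toFun := g, map_add' := fun a b => ?_, map_smul' := fun r a => ?_ }, LinearMap.ext hg⟩
  · rw [← mul_cancel_left_mem_nonZeroDivisors hx, mul_add, ← hg, ← hg, ← hg, map_add]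
  · rw [RingHom.id_apply, smul_eq_mul, ← mul_cancel_left_mem_nonZeroDivisors hx, ← hg,
      map_smul, smul_eq_mul, hg]
    ring

lemma Ideal.coe_mul_apply_comm {I : Ideal R} (f : I →ₗ[R] R) (u v : I) :
    (u : R) * f v = v * f u := by
  rw [← smul_eq_mul, ← smul_eq_mul, ← map_smul, ← map_smul]
  congr 1
  ext
  simp [mul_comm]

lemma mem_nonZeroDivisors_of_sq_le_span_singleton {𝔪 : Ideal R} {y r : R}
    (hsq : 𝔪 ^ 2 ≤ Ideal.span {y}) (hr𝔪 : r ∈ 𝔪) (hr : r ∈ R⁰) : y ∈ R⁰ := by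
  obtain ⟨c, hc⟩ := Ideal.mem_span_singleton'.mp (hsq (Ideal.pow_mem_pow hr𝔪 2))
  exact (mul_mem_nonZeroDivisors.mp (hc ▸ pow_mem hr 2)).2

theorem smul_top_dual_eq_span_singleton_smul {𝔪 : Ideal R} {y : R} (hy : y ∈ 𝔪)
    (hsq : 𝔪 ^ 2 ≤ Ideal.span {y}) (hyreg : y ∈ R⁰) (hM : ∀ (f : M →ₗ[R] R) u, f u ∈ 𝔪) :
    𝔪 • (⊤ : Submodule R (M →ₗ[R] R)) = Ideal.span {y} • ⊤ := by
  refine le_antisymm (Submodule.smul_le.mpr fun z hz f _ => ?_)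
    (Submodule.smul_mono_left ((Ideal.span_singleton_le_iff_mem _).mpr hy))
  obtain ⟨g, hg⟩ := (z • f).exists_eq_smul_of_forall_dvd hyreg fun u =>
    Ideal.mem_span_singleton.mp (hsq (by rw [pow_two]; exact Ideal.mul_mem_mul hz (hM f u)))
  rw [hg]
  exact Submodule.smul_mem_smul (Ideal.mem_span_singleton_self y) trivial

lemma Ideal.mul_range_eq_of_smul_top_eq {N : Type*} [AddCommGroup N] [Module R N]
    {𝔞 𝔟 : Ideal R} (h : 𝔞 • (⊤ : Submodule R N) = 𝔟 • ⊤) (φ : N →ₗ[R] R) :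
    𝔞 * LinearMap.range φ = 𝔟 * LinearMap.range φ := by
  rw [LinearMap.range_eq_map, ← Ideal.smul_eq_mul, ← Ideal.smul_eq_mul, ← Submodule.map_smul'',
    ← Submodule.map_smul'', h]

lemma Ideal.colon_span_singleton_eq_range_applyₗ {I : Ideal R} {x : R} (hxI : x ∈ I)
    (hx : x ∈ R⁰) : (Ideal.span {x}).colon I =
      LinearMap.range (LinearMap.applyₗ (⟨x, hxI⟩ : I) : (I →ₗ[R] R) →ₗ[R] R) := by
  ext w
  constructor
  · intro hw
    obtain ⟨g, hg⟩ := (w • I.subtype).exists_eq_smul_of_forall_dvd hx fun u =>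
      Ideal.mem_span_singleton.mp (Submodule.mem_colon.mp hw u u.2)
    refine ⟨g, (mul_cancel_left_mem_nonZeroDivisors hx).mp ?_⟩
    have hgx : w * x = x * g ⟨x, hxI⟩ := LinearMap.congr_fun hg ⟨x, hxI⟩
    rw [LinearMap.applyₗ_apply_apply, ← hgx, mul_comm]
  · rintro ⟨g, rfl⟩
    refine Submodule.mem_colon.mpr fun p hp => Ideal.mem_span_singleton'.mpr ⟨g ⟨p, hp⟩, ?_⟩
    have hswap : x * g ⟨p, hp⟩ = p * g ⟨x, hxI⟩ := Ideal.coe_mul_apply_comm g ⟨x, hxI⟩ ⟨p, hp⟩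
    rw [LinearMap.applyₗ_apply_apply, smul_eq_mul]
    linear_combination hswap

lemma traceIdeal_eq_iSup_range_applyₗ : traceIdeal R M =
    ⨆ u : M, LinearMap.range (LinearMap.applyₗ u : (M →ₗ[R] R) →ₗ[R] R) := by
  have : {r : R | ∃ (f : M →ₗ[R] R) (m : M), f m = r} =
      ⋃ u : M, (LinearMap.range (LinearMap.applyₗ u : (M →ₗ[R] R) →ₗ[R] R) : Set R) := by
    ext r
    simp only [Set.mem_ofPred_eq, Set.mem_iUnion, SetLike.mem_coe, LinearMap.mem_range,
      LinearMap.applyₗ_apply_apply]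
    exact exists_comm
  rw [traceIdeal, this, Ideal.span, Submodule.span_iUnion]
  simp_rw [Submodule.span_eq]

section FreeSummand

variable {R M : Type u} [CommRing R] [AddCommGroup M] [Module R M]

lemma hasFreeSummand_of_isUnit_apply (f : M →ₗ[R] R) {u : M} (hu : IsUnit (f u)) :
    HasFreeSummand R M :=
  ⟨LinearMap.toSpanSingleton R M (↑hu.unit⁻¹ • u), f, by ext; simp [Units.smul_def]⟩

lemma Ideal.exists_eq_span_singleton_of_hasFreeSummand {I : Ideal R} (h : HasFreeSummand R I) :
    ∃ z, I = Ideal.span {z} := by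
  obtain ⟨f, g, hgf⟩ := h
  have h1 : g (f 1) = 1 := LinearMap.congr_fun hgf 1
  refine ⟨f 1, le_antisymm (fun b hb => ?_) (Ideal.span_le.mpr (by simp))⟩
  rw [Ideal.mem_span_singleton']
  exact ⟨g ⟨b, hb⟩, by rw [mul_comm, Ideal.coe_mul_apply_comm, h1, mul_one]⟩

lemma apply_mem_maximalIdeal_of_not_hasFreeSummand [IsLocalRing R] (h : ¬HasFreeSummand R M)
    (f : M →ₗ[R] R) (u : M) : f u ∈ maximalIdeal R :=
  (mem_maximalIdeal _).mpr fun hu => h (hasFreeSummand_of_isUnit_apply f hu)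

end FreeSummand

theorem ulrich_constructions_general {R : Type u} [CommRing R] [IsLocalRing R]
    (hCM : ∃ r ∈ maximalIdeal R, r ∈ nonZeroDivisors R)
    (y : R) (hy : y ∈ maximalIdeal R)
    (hminmult : (maximalIdeal R) ^ 2 = Ideal.span {y} * maximalIdeal R) :
    (∀ (M : Type u) [AddCommGroup M] [Module R M], Module.Finite R M →
      TorsionFreeMod R M → ¬ HasFreeSummand R M →
      (maximalIdeal R) • (⊤ : Submodule R (M →ₗ[R] R)) =
        (Ideal.span {y}) • (⊤ : Submodule R (M →ₗ[R] R)))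
    ∧ (∀ I : Ideal R, (¬ ∃ z : R, I = Ideal.span {z}) →
        ∀ x ∈ I, x ∈ nonZeroDivisors R →
          maximalIdeal R * ((Ideal.span {x}).colon I) =
            Ideal.span {y} * ((Ideal.span {x}).colon I))
    ∧ (∀ I : Ideal R, (¬ ∃ z : R, I = Ideal.span {z}) →
        (∃ x ∈ I, x ∈ nonZeroDivisors R) →
          maximalIdeal R * traceIdeal R ↥I = Ideal.span {y} * traceIdeal R ↥I) := by
  have hsq : maximalIdeal R ^ 2 ≤ Ideal.span {y} := hminmult ▸ Ideal.mul_le_left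
  obtain ⟨r, hr𝔪, hr⟩ := hCM
  have hyreg : y ∈ R⁰ := mem_nonZeroDivisors_of_sq_le_span_singleton hsq hr𝔪 hr
  have dual_eq : ∀ (M : Type u) [AddCommGroup M] [Module R M], ¬HasFreeSummand R M →
      maximalIdeal R • (⊤ : Submodule R (M →ₗ[R] R)) = Ideal.span {y} • ⊤ := fun M _ _ hM =>
    smul_top_dual_eq_span_singleton_smul hy hsq hyreg
      (apply_mem_maximalIdeal_of_not_hasFreeSummand hM)
  have ideal_dual_eq : ∀ I : Ideal R, (¬∃ z, I = Ideal.span {z}) →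
      maximalIdeal R • (⊤ : Submodule R (I →ₗ[R] R)) = Ideal.span {y} • ⊤ := fun I hI =>
    dual_eq I fun h => hI (Ideal.exists_eq_span_singleton_of_hasFreeSummand h)
  refine ⟨fun M _ _ _ _ hM => dual_eq M hM, fun I hI x hxI hx => ?_, fun I hI _ => ?_⟩
  · rw [Ideal.colon_span_singleton_eq_range_applyₗ hxI hx]
    exact Ideal.mul_range_eq_of_smul_top_eq (ideal_dual_eq I hI) _
  · simp_rw [traceIdeal_eq_iSup_range_applyₗ, Ideal.mul_iSup,
      Ideal.mul_range_eq_of_smul_top_eq (ideal_dual_eq I hI)]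

/-- Let `(R, m, k)` be a one-dimensional Cohen–Macaulay local ring with
infinite residue field and minimal multiplicity, and let `y` be a minimal reduction of `m`
(so `m² = y·m`).  Then:
(a) if `M` is a finitely generated torsion-free `R`-module with no nonzero free direct summand,
    then `M^* = Hom_R(M, R)` is Ulrich, i.e. `m·M^* = y·M^*`;
(b) if `I` is a nonprincipal ideal of `R` and `x ∈ I` is a nonzerodivisor, then `(x : I)` is
    Ulrich;
(c) if `I` is a nonprincipal ideal of `R` containing a nonzerodivisor, then `tr_R(I)` is
    Ulrich. -/
theorem ulrich_constructions {R : Type u} [CommRing R] [IsNoetherianRing R] [IsLocalRing R]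
    (hdim : ringKrullDim R = 1)
    (hCM : ∃ r ∈ maximalIdeal R, r ∈ nonZeroDivisors R)
    (hres : Infinite (ResidueField R))
    (y : R) (hy : y ∈ maximalIdeal R)
    (hminmult : (maximalIdeal R) ^ 2 = Ideal.span {y} * maximalIdeal R) :
    (∀ (M : Type u) [AddCommGroup M] [Module R M], Module.Finite R M →
      TorsionFreeMod R M → ¬ HasFreeSummand R M →
      (maximalIdeal R) • (⊤ : Submodule R (M →ₗ[R] R)) =
        (Ideal.span {y}) • (⊤ : Submodule R (M →ₗ[R] R)))
    ∧ (∀ I : Ideal R, (¬ ∃ z : R, I = Ideal.span {z}) →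
        ∀ x ∈ I, x ∈ nonZeroDivisors R →
          maximalIdeal R * ((Ideal.span {x}).colon I) =
            Ideal.span {y} * ((Ideal.span {x}).colon I))
    ∧ (∀ I : Ideal R, (¬ ∃ z : R, I = Ideal.span {z}) →
        (∃ x ∈ I, x ∈ nonZeroDivisors R) →
          maximalIdeal R * traceIdeal R ↥I = Ideal.span {y} * traceIdeal R ↥I) :=
  ulrich_constructions_general hCM y hy hminmult
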